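/- The operator A₁ = ∂_t - (p/t)∂_p - p² - 1/(2t) commutes with the pseudo-diffusion operator L = ∂_t - (1/4)∂_xx + (1/(4t²))∂_pp, i.e. [L, A₁] = 0. -/

import Mathlib

noncomputable def pdT (Q : ℝ → ℝ → ℝ → ℝ) (x p t : ℝ) : ℝ := deriv (fun s => Q x p s) t
noncomputable def pdX (Q : ℝ → ℝ → ℝ → ℝ) (x p t : ℝ) : ℝ := deriv (fun z => Q z p t) x
noncomputable def pdP (Q : ℝ → ℝ → ℝ → ℝ) (x p t : ℝ) : ℝ := deriv (fun z => Q x z t) p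
noncomputable def pdXX (Q : ℝ → ℝ → ℝ → ℝ) (x p t : ℝ) : ℝ :=
  deriv (fun y => deriv (fun z => Q z p t) y) x
noncomputable def pdPP (Q : ℝ → ℝ → ℝ → ℝ) (x p t : ℝ) : ℝ :=
  deriv (fun y => deriv (fun z => Q x z t) y) p

/-- The pseudo-diffusion operator `L = ∂_t - (1/4)∂_xx + (1/(4t²))∂_pp`. -/
noncomputable def Lop (Q : ℝ → ℝ → ℝ → ℝ) (x p t : ℝ) : ℝ :=
  pdT Q x p t - (1/4) * pdXX Q x p t + 1/(4*t^2) * pdPP Q x p t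

/-- Smoothness on the region `t > 0`. -/
def SmoothPos (Q : ℝ → ℝ → ℝ → ℝ) : Prop :=
  ContDiffOn ℝ (⊤ : ℕ∞) (fun v : ℝ × ℝ × ℝ => Q v.1 v.2.1 v.2.2) {v : ℝ × ℝ × ℝ | 0 < v.2.2}

/-- The operator `A₁ = ∂_t - (p/t)∂_p - p² - 1/(2t)`. -/
noncomputable def A1op (Q : ℝ → ℝ → ℝ → ℝ) : ℝ → ℝ → ℝ → ℝ :=
  fun x p t => pdT Q x p t - (p/t) * pdP Q x p t - (p^2 + 1/(2*t)) * Q x p t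

open Filter Topology

abbrev V3 := ℝ × ℝ × ℝ
def US : Set V3 := {v | 0 < v.2.2}
lemma isOpen_US : IsOpen US := isOpen_lt continuous_const (continuous_snd.comp continuous_snd)

noncomputable def Pd (e : V3) (K : V3 → ℝ) (v : V3) : ℝ := fderiv ℝ K v e

def ee1 : V3 := (1,0,0)
def ee2 : V3 := (0,1,0)
def ee3 : V3 := (0,0,1)

lemma diffAtU {K : V3 → ℝ} (hK : ContDiffOn ℝ (⊤ : ℕ∞) K US) {v : V3} (hv : v ∈ US) :
    DifferentiableAt ℝ K v :=
  (hK.contDiffAt (isOpen_US.mem_nhds hv)).differentiableAt (by norm_num)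

lemma Pd_smooth {K : V3 → ℝ} (hK : ContDiffOn ℝ (⊤ : ℕ∞) K US) (e : V3) :
    ContDiffOn ℝ (⊤ : ℕ∞) (Pd e K) US := by
  have h := ((contDiffOn_infty_iff_fderiv_of_isOpen isOpen_US).1 hK).2
  exact h.clm_apply contDiffOn_const

lemma Pd_comm {K : V3 → ℝ} (hK : ContDiffOn ℝ (⊤ : ℕ∞) K US) {v : V3} (hv : v ∈ US) (a b : V3) :
    Pd a (Pd b K) v = Pd b (Pd a K) v := by
  have hsymm : IsSymmSndFDerivAt ℝ K v :=
    (hK.contDiffAt (isOpen_US.mem_nhds hv)).isSymmSndFDerivAt (by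
      rw [minSmoothness_of_isRCLikeNormedField]
      exact WithTop.coe_le_coe.2 (le_top : (2:ℕ∞) ≤ ⊤))
  have hd : DifferentiableAt ℝ (fderiv ℝ K) v :=
    (((contDiffOn_infty_iff_fderiv_of_isOpen isOpen_US).1 hK).2.contDiffAt
      (isOpen_US.mem_nhds hv)).differentiableAt (by norm_num)
  have key : ∀ c d : V3, Pd c (Pd d K) v = fderiv ℝ (fderiv ℝ K) v c d := by
    intro c d
    show fderiv ℝ (fun w => fderiv ℝ K w d) v c = _
    rw [fderiv_clm_apply hd (differentiableAt_const d)]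
    simp
  rw [key, key]; exact hsymm a b

lemma Pd_congrU {a b : V3 → ℝ} (h : ∀ w ∈ US, a w = b w) {v : V3} (hv : v ∈ US) (e : V3) :
    Pd e a v = Pd e b v := by
  unfold Pd
  rw [Filter.EventuallyEq.fderiv_eq (by filter_upwards [isOpen_US.mem_nhds hv] using h)]

lemma Pd_sub (e : V3) {a b : V3 → ℝ} {v : V3} (ha : DifferentiableAt ℝ a v)
    (hb : DifferentiableAt ℝ b v) :
    Pd e (fun w => a w - b w) v = Pd e a v - Pd e b v := by
  unfold Pd; rw [fderiv_fun_sub ha hb]; simp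

lemma Pd_add (e : V3) {a b : V3 → ℝ} {v : V3} (ha : DifferentiableAt ℝ a v)
    (hb : DifferentiableAt ℝ b v) :
    Pd e (fun w => a w + b w) v = Pd e a v + Pd e b v := by
  unfold Pd; rw [fderiv_fun_add ha hb]; simp

lemma Pd_mul (e : V3) {a b : V3 → ℝ} {v : V3} (ha : DifferentiableAt ℝ a v)
    (hb : DifferentiableAt ℝ b v) :
    Pd e (fun w => a w * b w) v = Pd e a v * b v + a v * Pd e b v := by
  unfold Pd; rw [fderiv_fun_mul ha hb]; simp; ring

lemma Pd_const_mul (e : V3) (c : ℝ) {b : V3 → ℝ} {v : V3} (hb : DifferentiableAt ℝ b v) :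
    Pd e (fun w => c * b w) v = c * Pd e b v := by
  unfold Pd; rw [fderiv_const_mul hb]; simp

-- slice lemmas
lemma sliceX {K : V3 → ℝ} {x p t : ℝ} (h : DifferentiableAt ℝ K (x,p,t)) :
    deriv (fun z => K (z,p,t)) x = Pd ee1 K (x,p,t) := by
  have h1 : HasDerivAt (fun z : ℝ => ((z,p,t) : V3)) ee1 x :=
    (hasDerivAt_id x).prodMk ((hasDerivAt_const x p).prodMk (hasDerivAt_const x t))
  exact (h.hasFDerivAt.comp_hasDerivAt x h1).deriv

lemma sliceP {K : V3 → ℝ} {x p t : ℝ} (h : DifferentiableAt ℝ K (x,p,t)) :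
    deriv (fun z => K (x,z,t)) p = Pd ee2 K (x,p,t) := by
  have h1 : HasDerivAt (fun z : ℝ => ((x,z,t) : V3)) ee2 p :=
    (hasDerivAt_const p x).prodMk ((hasDerivAt_id p).prodMk (hasDerivAt_const p t))
  exact (h.hasFDerivAt.comp_hasDerivAt p h1).deriv

lemma sliceT {K : V3 → ℝ} {x p t : ℝ} (h : DifferentiableAt ℝ K (x,p,t)) :
    deriv (fun s => K (x,p,s)) t = Pd ee3 K (x,p,t) := by
  have h1 : HasDerivAt (fun s : ℝ => ((x,p,s) : V3)) ee3 t :=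
    (hasDerivAt_const t x).prodMk ((hasDerivAt_const t p).prodMk (hasDerivAt_id t))
  exact (h.hasFDerivAt.comp_hasDerivAt t h1).deriv

lemma memU {x p t : ℝ} (ht : 0 < t) : ((x,p,t) : V3) ∈ US := ht

noncomputable def cc1 : V3 → ℝ := fun v => v.2.1 / v.2.2
noncomputable def cc2 : V3 → ℝ := fun v => v.2.1^2 + 1/(2*v.2.2)
noncomputable def cc3 : V3 → ℝ := fun v => 1/(4*v.2.2^2)
noncomputable def cc4 : V3 → ℝ := fun v => 1/v.2.2
noncomputable def cc5 : V3 → ℝ := fun v => 2*v.2.1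

lemma cP2 : ContDiffOn ℝ (⊤:ℕ∞) (fun v : V3 => v.2.1) US :=
  (contDiff_fst.comp contDiff_snd).contDiffOn
lemma cP3 : ContDiffOn ℝ (⊤:ℕ∞) (fun v : V3 => v.2.2) US :=
  (contDiff_snd.comp contDiff_snd).contDiffOn
lemma hne : ∀ v ∈ US, (v : V3).2.2 ≠ 0 := fun v hv => ne_of_gt hv

lemma hcc1 : ContDiffOn ℝ (⊤:ℕ∞) cc1 US := cP2.div cP3 hne
lemma hcc2 : ContDiffOn ℝ (⊤:ℕ∞) cc2 US := by
  have h1 : ContDiffOn ℝ (⊤:ℕ∞) (fun v : V3 => v.2.1^2) US :=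
    ((contDiffOn_const (c:=(1:ℝ))).mul (cP2.mul cP2)).congr (fun v _ => by ring)
  have h2 : ContDiffOn ℝ (⊤:ℕ∞) (fun v : V3 => 1/(2*v.2.2)) US :=
    contDiffOn_const.div (contDiffOn_const.mul cP3) (fun v hv => by
      have := hne v hv; positivity)
  exact h1.add h2
lemma hcc3 : ContDiffOn ℝ (⊤:ℕ∞) cc3 US := by
  have h1 : ContDiffOn ℝ (⊤:ℕ∞) (fun v : V3 => 4*v.2.2^2) US :=
    ((contDiffOn_const (c:=(4:ℝ))).mul (cP3.mul cP3)).congr (fun v _ => by ring)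
  exact contDiffOn_const.div h1 (fun v hv => by have := hne v hv; positivity)
lemma hcc4 : ContDiffOn ℝ (⊤:ℕ∞) cc4 US := contDiffOn_const.div cP3 hne
lemma hcc5 : ContDiffOn ℝ (⊤:ℕ∞) cc5 US := contDiffOn_const.mul cP2

section coeffderivs
variable {x p t : ℝ}

lemma cc1_p1 (ht : 0 < t) : Pd ee1 cc1 (x,p,t) = 0 := by
  rw [← sliceX (diffAtU hcc1 (memU ht))]
  have : (fun z : ℝ => cc1 (z,p,t)) = fun _ : ℝ => p / t := by funext z; simp [cc1]
  rw [this, deriv_const]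

lemma cc1_p2 (ht : 0 < t) : Pd ee2 cc1 (x,p,t) = 1/t := by
  rw [← sliceP (diffAtU hcc1 (memU ht))]
  have h : (fun z : ℝ => cc1 (x,z,t)) = fun z : ℝ => z / t := by funext z; simp [cc1]
  rw [h, ((hasDerivAt_id' p).div_const t).deriv]

lemma cc1_p3 (ht : 0 < t) : Pd ee3 cc1 (x,p,t) = -(p/t^2) := by
  rw [← sliceT (diffAtU hcc1 (memU ht))]
  have h : (fun s : ℝ => cc1 (x,p,s)) = fun s : ℝ => p * s⁻¹ := by
    funext s; simp [cc1, div_eq_mul_inv]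
  rw [h, ((hasDerivAt_inv (ne_of_gt ht)).const_mul p).deriv]
  field_simp

lemma cc2_p1 (ht : 0 < t) : Pd ee1 cc2 (x,p,t) = 0 := by
  rw [← sliceX (diffAtU hcc2 (memU ht))]
  have : (fun z : ℝ => cc2 (z,p,t)) = fun _ : ℝ => p^2 + 1/(2*t) := by funext z; simp [cc2]
  rw [this, deriv_const]

lemma cc2_p2 (ht : 0 < t) : Pd ee2 cc2 (x,p,t) = 2*p := by
  rw [← sliceP (diffAtU hcc2 (memU ht))]
  have h : (fun z : ℝ => cc2 (x,z,t)) = fun z : ℝ => z^2 + 1/(2*t) := by funext z; simp [cc2]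
  rw [h, ((hasDerivAt_pow 2 p).add_const (1/(2*t))).deriv]
  norm_num

lemma cc2_p3 (ht : 0 < t) : Pd ee3 cc2 (x,p,t) = -(1/(2*t^2)) := by
  rw [← sliceT (diffAtU hcc2 (memU ht))]
  have h : (fun s : ℝ => cc2 (x,p,s)) = fun s : ℝ => p^2 + (2*s)⁻¹ := by
    funext s; simp [cc2, one_div]
  have hd : HasDerivAt (fun s : ℝ => p^2 + (2*s)⁻¹) (-(2*1)/(2*t)^2) t := by
    have h2 : HasDerivAt (fun s : ℝ => 2*s) (2*1) t := (hasDerivAt_id t).const_mul 2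
    exact (h2.inv (by positivity)).const_add (p^2)
  rw [h, hd.deriv]
  field_simp

lemma cc3_p2 (ht : 0 < t) : Pd ee2 cc3 (x,p,t) = 0 := by
  rw [← sliceP (diffAtU hcc3 (memU ht))]
  have : (fun z : ℝ => cc3 (x,z,t)) = fun _ : ℝ => 1/(4*t^2) := by funext z; simp [cc3]
  rw [this, deriv_const]

lemma cc3_p3 (ht : 0 < t) : Pd ee3 cc3 (x,p,t) = -(1/(2*t^3)) := by
  rw [← sliceT (diffAtU hcc3 (memU ht))]
  have h : (fun s : ℝ => cc3 (x,p,s)) = fun s : ℝ => (4*s^2)⁻¹ := by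
    funext s; simp [cc3, one_div]
  have hd : HasDerivAt (fun s : ℝ => (4*s^2)⁻¹) (-(4*(2*t^1))/(4*t^2)^2) t := by
    have h2 : HasDerivAt (fun s : ℝ => 4*s^2) (4*(2*t^1)) t := (hasDerivAt_pow 2 t).const_mul 4
    exact h2.inv (by positivity)
  rw [h, hd.deriv]
  field_simp; ring

lemma cc4_p2 (ht : 0 < t) : Pd ee2 cc4 (x,p,t) = 0 := by
  rw [← sliceP (diffAtU hcc4 (memU ht))]
  have : (fun z : ℝ => cc4 (x,z,t)) = fun _ : ℝ => 1/t := by funext z; simp [cc4]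
  rw [this, deriv_const]

lemma cc5_p2 (ht : 0 < t) : Pd ee2 cc5 (x,p,t) = 2 := by
  rw [← sliceP (diffAtU hcc5 (memU ht))]
  have h : (fun z : ℝ => cc5 (x,z,t)) = fun z : ℝ => 2*z := by funext z; simp [cc5]
  rw [h, ((hasDerivAt_id' p).const_mul 2).deriv]
  norm_num

end coeffderivs

noncomputable def AK (K : V3 → ℝ) : V3 → ℝ :=
  fun v => Pd ee3 K v - cc1 v * Pd ee2 K v - cc2 v * K v
noncomputable def LK (K : V3 → ℝ) : V3 → ℝ :=
  fun v => Pd ee3 K v - (1/4) * Pd ee1 (Pd ee1 K) v + cc3 v * Pd ee2 (Pd ee2 K) v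

lemma hAK {K : V3 → ℝ} (hK : ContDiffOn ℝ (⊤:ℕ∞) K US) :
    ContDiffOn ℝ (⊤:ℕ∞) (AK K) US :=
  ((Pd_smooth hK ee3).sub (hcc1.mul (Pd_smooth hK ee2))).sub (hcc2.mul hK)

lemma hLK {K : V3 → ℝ} (hK : ContDiffOn ℝ (⊤:ℕ∞) K US) :
    ContDiffOn ℝ (⊤:ℕ∞) (LK K) US :=
  ((Pd_smooth hK ee3).sub (contDiffOn_const.mul (Pd_smooth (Pd_smooth hK ee1) ee1))).add
    (hcc3.mul (Pd_smooth (Pd_smooth hK ee2) ee2))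

lemma trans_pdT {K : V3 → ℝ} (hK : ContDiffOn ℝ (⊤:ℕ∞) K US) {R : ℝ → ℝ → ℝ → ℝ}
    (hRK : ∀ a b c, 0 < c → R a b c = K (a,b,c)) {x p t : ℝ} (ht : 0 < t) :
    pdT R x p t = Pd ee3 K (x,p,t) := by
  unfold pdT
  have hev : (fun s => R x p s) =ᶠ[nhds t] (fun s => K (x,p,s)) := by
    filter_upwards [eventually_gt_nhds ht] with s hs using hRK x p s hs
  rw [hev.deriv_eq, sliceT (diffAtU hK (memU ht))]

lemma trans_pdP {K : V3 → ℝ} (hK : ContDiffOn ℝ (⊤:ℕ∞) K US) {R : ℝ → ℝ → ℝ → ℝ}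
    (hRK : ∀ a b c, 0 < c → R a b c = K (a,b,c)) {x p t : ℝ} (ht : 0 < t) :
    pdP R x p t = Pd ee2 K (x,p,t) := by
  unfold pdP
  rw [show (fun z => R x z t) = fun z => K (x,z,t) from funext fun z => hRK x z t ht,
    sliceP (diffAtU hK (memU ht))]

lemma trans_pdXX {K : V3 → ℝ} (hK : ContDiffOn ℝ (⊤:ℕ∞) K US) {R : ℝ → ℝ → ℝ → ℝ}
    (hRK : ∀ a b c, 0 < c → R a b c = K (a,b,c)) {x p t : ℝ} (ht : 0 < t) :
    pdXX R x p t = Pd ee1 (Pd ee1 K) (x,p,t) := by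
  unfold pdXX
  have hi : (fun y => deriv (fun z => R z p t) y) = fun y => Pd ee1 K (y,p,t) := by
    funext y
    rw [show (fun z => R z p t) = fun z => K (z,p,t) from funext fun z => hRK z p t ht]
    exact sliceX (diffAtU hK (memU ht))
  rw [hi]
  exact sliceX (diffAtU (Pd_smooth hK ee1) (memU ht))

lemma trans_pdPP {K : V3 → ℝ} (hK : ContDiffOn ℝ (⊤:ℕ∞) K US) {R : ℝ → ℝ → ℝ → ℝ}
    (hRK : ∀ a b c, 0 < c → R a b c = K (a,b,c)) {x p t : ℝ} (ht : 0 < t) :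
    pdPP R x p t = Pd ee2 (Pd ee2 K) (x,p,t) := by
  unfold pdPP
  have hi : (fun y => deriv (fun z => R x z t) y) = fun y => Pd ee2 K (x,y,t) := by
    funext y
    rw [show (fun z => R x z t) = fun z => K (x,z,t) from funext fun z => hRK x z t ht]
    exact sliceP (diffAtU hK (memU ht))
  rw [hi]
  exact sliceP (diffAtU (Pd_smooth hK ee2) (memU ht))

lemma trans_A1 {K : V3 → ℝ} (hK : ContDiffOn ℝ (⊤:ℕ∞) K US) {R : ℝ → ℝ → ℝ → ℝ}
    (hRK : ∀ a b c, 0 < c → R a b c = K (a,b,c)) :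
    ∀ a b c, 0 < c → A1op R a b c = AK K (a,b,c) := by
  intro a b c hc
  unfold A1op AK
  rw [trans_pdT hK hRK hc, trans_pdP hK hRK hc, hRK a b c hc]
  simp [cc1, cc2]

lemma trans_L {K : V3 → ℝ} (hK : ContDiffOn ℝ (⊤:ℕ∞) K US) {R : ℝ → ℝ → ℝ → ℝ}
    (hRK : ∀ a b c, 0 < c → R a b c = K (a,b,c)) :
    ∀ a b c, 0 < c → Lop R a b c = LK K (a,b,c) := by
  intro a b c hc
  unfold Lop LK
  rw [trans_pdT hK hRK hc, trans_pdXX hK hRK hc, trans_pdPP hK hRK hc]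
  simp [cc3]

lemma comm3 {F : V3 → ℝ} (hF : ContDiffOn ℝ (⊤:ℕ∞) F US) {v : V3} (hv : v ∈ US) (a b : V3) :
    Pd a (Pd a (Pd b F)) v = Pd b (Pd a (Pd a F)) v := by
  have h1 : ∀ w ∈ US, Pd a (Pd b F) w = Pd b (Pd a F) w := fun w hw => Pd_comm hF hw a b
  calc Pd a (Pd a (Pd b F)) v = Pd a (Pd b (Pd a F)) v := Pd_congrU h1 hv a
    _ = Pd b (Pd a (Pd a F)) v := Pd_comm (Pd_smooth hF a) hv a b

lemma Pd_const (e : V3) (c : ℝ) (v : V3) : Pd e (fun _ => c) v = 0 := by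
  unfold Pd; rw [fderiv_fun_const]; simp

lemma Pd_neg (e : V3) {b : V3 → ℝ} (v : V3) :
    Pd e (fun w => -(b w)) v = -(Pd e b v) := by
  unfold Pd; rw [fderiv_fun_neg]; simp

lemma Pd_comb5 (e : V3) {c1f a1 c2f a2 c3f a3 c4f a4 c5f a5 : V3 → ℝ} {w : V3}
    (h1 : DifferentiableAt ℝ c1f w) (h2 : DifferentiableAt ℝ a1 w)
    (h3 : DifferentiableAt ℝ c2f w) (h4 : DifferentiableAt ℝ a2 w)
    (h5 : DifferentiableAt ℝ c3f w) (h6 : DifferentiableAt ℝ a3 w)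
    (h7 : DifferentiableAt ℝ c4f w) (h8 : DifferentiableAt ℝ a4 w)
    (h9 : DifferentiableAt ℝ c5f w) (h10 : DifferentiableAt ℝ a5 w) :
    Pd e (fun v => c1f v * a1 v - c2f v * a2 v - c3f v * a3 v - c4f v * a4 v - c5f v * a5 v) w
      = (Pd e c1f w * a1 w + c1f w * Pd e a1 w) - (Pd e c2f w * a2 w + c2f w * Pd e a2 w)
        - (Pd e c3f w * a3 w + c3f w * Pd e a3 w) - (Pd e c4f w * a4 w + c4f w * Pd e a4 w)
        - (Pd e c5f w * a5 w + c5f w * Pd e a5 w) := by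
  have t5 : Pd e (fun v => c1f v * a1 v - c2f v * a2 v - c3f v * a3 v - c4f v * a4 v
        - c5f v * a5 v) w
      = Pd e (fun v => c1f v * a1 v - c2f v * a2 v - c3f v * a3 v - c4f v * a4 v) w
        - Pd e (fun v => c5f v * a5 v) w :=
    Pd_sub e ((((h1.mul h2).sub (h3.mul h4)).sub (h5.mul h6)).sub (h7.mul h8)) (h9.mul h10)
  have t4 : Pd e (fun v => c1f v * a1 v - c2f v * a2 v - c3f v * a3 v - c4f v * a4 v) w
      = Pd e (fun v => c1f v * a1 v - c2f v * a2 v - c3f v * a3 v) w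
        - Pd e (fun v => c4f v * a4 v) w :=
    Pd_sub e (((h1.mul h2).sub (h3.mul h4)).sub (h5.mul h6)) (h7.mul h8)
  have t3 : Pd e (fun v => c1f v * a1 v - c2f v * a2 v - c3f v * a3 v) w
      = Pd e (fun v => c1f v * a1 v - c2f v * a2 v) w - Pd e (fun v => c3f v * a3 v) w :=
    Pd_sub e ((h1.mul h2).sub (h3.mul h4)) (h5.mul h6)
  have t2 : Pd e (fun v => c1f v * a1 v - c2f v * a2 v) w
      = Pd e (fun v => c1f v * a1 v) w - Pd e (fun v => c2f v * a2 v) w :=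
    Pd_sub e (h1.mul h2) (h3.mul h4)
  rw [t5, t4, t3, t2, Pd_mul e h1 h2, Pd_mul e h3 h4, Pd_mul e h5 h6, Pd_mul e h7 h8,
    Pd_mul e h9 h10]

lemma Pd_expand5 (e : V3) (G c1f a1 c2f a2 c3f a3 c4f a4 c5f a5 : V3 → ℝ) {v : V3}
    (hv : v ∈ US)
    (hG : ∀ w ∈ US, G w
      = c1f w * a1 w - c2f w * a2 w - c3f w * a3 w - c4f w * a4 w - c5f w * a5 w)
    (h1 : DifferentiableAt ℝ c1f v) (h2 : DifferentiableAt ℝ a1 v)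
    (h3 : DifferentiableAt ℝ c2f v) (h4 : DifferentiableAt ℝ a2 v)
    (h5 : DifferentiableAt ℝ c3f v) (h6 : DifferentiableAt ℝ a3 v)
    (h7 : DifferentiableAt ℝ c4f v) (h8 : DifferentiableAt ℝ a4 v)
    (h9 : DifferentiableAt ℝ c5f v) (h10 : DifferentiableAt ℝ a5 v) :
    Pd e G v
      = (Pd e c1f v * a1 v + c1f v * Pd e a1 v) - (Pd e c2f v * a2 v + c2f v * Pd e a2 v)
        - (Pd e c3f v * a3 v + c3f v * Pd e a3 v) - (Pd e c4f v * a4 v + c4f v * Pd e a4 v)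
        - (Pd e c5f v * a5 v + c5f v * Pd e a5 v) := by
  rw [Pd_congrU hG hv e]
  exact Pd_comb5 e h1 h2 h3 h4 h5 h6 h7 h8 h9 h10

noncomputable def oneF : V3 → ℝ := fun _ => 1
noncomputable def zeroF : V3 → ℝ := fun _ => 0
noncomputable def quarterF : V3 → ℝ := fun _ => 1/4
noncomputable def ncc3 : V3 → ℝ := fun v => -(cc3 v)

lemma honeF : ContDiffOn ℝ (⊤:ℕ∞) oneF US := contDiffOn_const
lemma hzeroF : ContDiffOn ℝ (⊤:ℕ∞) zeroF US := contDiffOn_const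
lemma hquarterF : ContDiffOn ℝ (⊤:ℕ∞) quarterF US := contDiffOn_const
lemma hncc3 : ContDiffOn ℝ (⊤:ℕ∞) ncc3 US := hcc3.neg

lemma oneF_pd (e : V3) (v : V3) : Pd e oneF v = 0 := Pd_const e 1 v
lemma zeroF_pd (e : V3) (v : V3) : Pd e zeroF v = 0 := Pd_const e 0 v
lemma quarterF_pd (e : V3) (v : V3) : Pd e quarterF v = 0 := Pd_const e (1/4) v
lemma ncc3_pd (e : V3) (v : V3) : Pd e ncc3 v = -(Pd e cc3 v) := Pd_neg e v

lemma stage0A {F : V3 → ℝ} : ∀ w ∈ US, AK F w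
    = oneF w * Pd ee3 F w - cc1 w * Pd ee2 F w - cc2 w * F w
      - zeroF w * zeroF w - zeroF w * zeroF w := by
  intro w _; unfold AK oneF zeroF; ring

lemma stage0L {F : V3 → ℝ} : ∀ w ∈ US, LK F w
    = oneF w * Pd ee3 F w - quarterF w * Pd ee1 (Pd ee1 F) w - ncc3 w * Pd ee2 (Pd ee2 F) w
      - zeroF w * zeroF w - zeroF w * zeroF w := by
  intro w _; unfold LK oneF zeroF quarterF ncc3; ring

lemma key {F : V3 → ℝ} (hF : ContDiffOn ℝ (⊤:ℕ∞) F US) {x p t : ℝ} (ht : 0 < t) :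
    LK (AK F) (x,p,t) = AK (LK F) (x,p,t) := by
  have hv : ((x,p,t):V3) ∈ US := memU ht
  have htne : t ≠ 0 := ne_of_gt ht
  have s1 := Pd_smooth hF ee1
  have s2 := Pd_smooth hF ee2
  have s3 := Pd_smooth hF ee3
  have s11 := Pd_smooth s1 ee1
  have s22 := Pd_smooth s2 ee2
  have s12 := Pd_smooth s2 ee1
  have s13 := Pd_smooth s3 ee1
  have s23 := Pd_smooth s3 ee2
  -- generic first-order expansion of AK F
  have expA : ∀ e : V3, ∀ w ∈ US, Pd e (AK F) w
      = Pd e (Pd ee3 F) w - Pd e cc1 w * Pd ee2 F w - cc1 w * Pd e (Pd ee2 F) w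
        - Pd e cc2 w * F w - cc2 w * Pd e F w := by
    intro e w hw
    rw [Pd_expand5 e (AK F) oneF (Pd ee3 F) cc1 (Pd ee2 F) cc2 F zeroF zeroF zeroF zeroF hw
      stage0A (diffAtU honeF hw) (diffAtU s3 hw) (diffAtU hcc1 hw) (diffAtU s2 hw)
      (diffAtU hcc2 hw) (diffAtU hF hw) (diffAtU hzeroF hw) (diffAtU hzeroF hw)
      (diffAtU hzeroF hw) (diffAtU hzeroF hw), oneF_pd, zeroF_pd]
    unfold oneF zeroF; ring
  -- generic first-order expansion of LK F
  have expL : ∀ e : V3, ∀ w ∈ US, Pd e (LK F) w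
      = Pd e (Pd ee3 F) w - (1/4) * Pd e (Pd ee1 (Pd ee1 F)) w
        + Pd e cc3 w * Pd ee2 (Pd ee2 F) w + cc3 w * Pd e (Pd ee2 (Pd ee2 F)) w := by
    intro e w hw
    rw [Pd_expand5 e (LK F) oneF (Pd ee3 F) quarterF (Pd ee1 (Pd ee1 F)) ncc3
      (Pd ee2 (Pd ee2 F)) zeroF zeroF zeroF zeroF hw stage0L (diffAtU honeF hw)
      (diffAtU s3 hw) (diffAtU hquarterF hw) (diffAtU s11 hw) (diffAtU hncc3 hw)
      (diffAtU s22 hw) (diffAtU hzeroF hw) (diffAtU hzeroF hw) (diffAtU hzeroF hw)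
      (diffAtU hzeroF hw), oneF_pd, zeroF_pd, quarterF_pd, ncc3_pd]
    unfold oneF zeroF quarterF ncc3; ring
  -- (1) third coordinate derivative of AK F at v
  have h1 : Pd ee3 (AK F) (x,p,t)
      = Pd ee3 (Pd ee3 F) (x,p,t) + (p/t^2) * Pd ee2 F (x,p,t)
        - cc1 (x,p,t) * Pd ee3 (Pd ee2 F) (x,p,t) + (1/(2*t^2)) * F (x,p,t)
        - cc2 (x,p,t) * Pd ee3 F (x,p,t) := by
    rw [expA ee3 _ hv, cc1_p3 ht, cc2_p3 ht]; ring
  -- (2) xx derivative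
  have hB1 : ∀ w ∈ US, Pd ee1 (AK F) w
      = oneF w * Pd ee1 (Pd ee3 F) w - cc1 w * Pd ee1 (Pd ee2 F) w - cc2 w * Pd ee1 F w
        - zeroF w * zeroF w - zeroF w * zeroF w := by
    intro w hw
    obtain ⟨a, b, c⟩ := w
    have hc : (0:ℝ) < c := hw
    rw [expA ee1 _ hw, cc1_p1 hc, cc2_p1 hc]
    unfold oneF zeroF; ring
  have hXX : Pd ee1 (Pd ee1 (AK F)) (x,p,t)
      = Pd ee1 (Pd ee1 (Pd ee3 F)) (x,p,t) - cc1 (x,p,t) * Pd ee1 (Pd ee1 (Pd ee2 F)) (x,p,t)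
        - cc2 (x,p,t) * Pd ee1 (Pd ee1 F) (x,p,t) := by
    rw [Pd_expand5 ee1 (Pd ee1 (AK F)) oneF (Pd ee1 (Pd ee3 F)) cc1 (Pd ee1 (Pd ee2 F)) cc2
      (Pd ee1 F) zeroF zeroF zeroF zeroF hv hB1 (diffAtU honeF hv) (diffAtU s13 hv)
      (diffAtU hcc1 hv) (diffAtU s12 hv) (diffAtU hcc2 hv) (diffAtU s1 hv)
      (diffAtU hzeroF hv) (diffAtU hzeroF hv) (diffAtU hzeroF hv) (diffAtU hzeroF hv),
      oneF_pd, zeroF_pd, cc1_p1 ht, cc2_p1 ht]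
    unfold oneF zeroF; ring
  -- (3) pp derivative
  have hB2 : ∀ w ∈ US, Pd ee2 (AK F) w
      = oneF w * Pd ee2 (Pd ee3 F) w - cc4 w * Pd ee2 F w - cc1 w * Pd ee2 (Pd ee2 F) w
        - cc5 w * F w - cc2 w * Pd ee2 F w := by
    intro w hw
    obtain ⟨a, b, c⟩ := w
    have hc : (0:ℝ) < c := hw
    rw [expA ee2 _ hw, cc1_p2 hc, cc2_p2 hc]
    unfold oneF cc4 cc5; ring
  have hPP : Pd ee2 (Pd ee2 (AK F)) (x,p,t)
      = Pd ee2 (Pd ee2 (Pd ee3 F)) (x,p,t) - (2/t) * Pd ee2 (Pd ee2 F) (x,p,t)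
        - cc1 (x,p,t) * Pd ee2 (Pd ee2 (Pd ee2 F)) (x,p,t) - 2 * F (x,p,t)
        - 4*p * Pd ee2 F (x,p,t) - cc2 (x,p,t) * Pd ee2 (Pd ee2 F) (x,p,t) := by
    rw [Pd_expand5 ee2 (Pd ee2 (AK F)) oneF (Pd ee2 (Pd ee3 F)) cc4 (Pd ee2 F) cc1
      (Pd ee2 (Pd ee2 F)) cc5 F cc2 (Pd ee2 F) hv hB2 (diffAtU honeF hv) (diffAtU s23 hv)
      (diffAtU hcc4 hv) (diffAtU s2 hv) (diffAtU hcc1 hv) (diffAtU s22 hv)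
      (diffAtU hcc5 hv) (diffAtU hF hv) (diffAtU hcc2 hv) (diffAtU s2 hv),
      oneF_pd, cc4_p2 ht, cc1_p2 ht, cc5_p2 ht, cc2_p2 ht]
    unfold oneF cc4 cc5; field_simp; ring
  -- (4),(5) derivatives of LK F at v
  have h4 : Pd ee3 (LK F) (x,p,t)
      = Pd ee3 (Pd ee3 F) (x,p,t) - (1/4) * Pd ee3 (Pd ee1 (Pd ee1 F)) (x,p,t)
        - (1/(2*t^3)) * Pd ee2 (Pd ee2 F) (x,p,t)
        + cc3 (x,p,t) * Pd ee3 (Pd ee2 (Pd ee2 F)) (x,p,t) := by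
    rw [expL ee3 _ hv, cc3_p3 ht]; ring
  have h5 : Pd ee2 (LK F) (x,p,t)
      = Pd ee2 (Pd ee3 F) (x,p,t) - (1/4) * Pd ee2 (Pd ee1 (Pd ee1 F)) (x,p,t)
        + cc3 (x,p,t) * Pd ee2 (Pd ee2 (Pd ee2 F)) (x,p,t) := by
    rw [expL ee2 _ hv, cc3_p2 ht]; ring
  -- assemble
  show Pd ee3 (AK F) (x,p,t) - (1/4) * Pd ee1 (Pd ee1 (AK F)) (x,p,t)
      + cc3 (x,p,t) * Pd ee2 (Pd ee2 (AK F)) (x,p,t)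
    = Pd ee3 (LK F) (x,p,t) - cc1 (x,p,t) * Pd ee2 (LK F) (x,p,t)
      - cc2 (x,p,t) * (Pd ee3 F (x,p,t) - (1/4) * Pd ee1 (Pd ee1 F) (x,p,t)
        + cc3 (x,p,t) * Pd ee2 (Pd ee2 F) (x,p,t))
  rw [h1, hXX, hPP, h4, h5,
    Pd_comm hF hv ee3 ee2,
    comm3 hF hv ee2 ee3,
    comm3 hF hv ee1 ee3,
    comm3 hF hv ee1 ee2]
  unfold cc1 cc2 cc3
  field_simp
  ring

/-- `[L, A₁] = 0` on smooth functions. -/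
theorem stmt8 (Q : ℝ → ℝ → ℝ → ℝ) (hQ : SmoothPos Q) :
    ∀ x p t : ℝ, 0 < t →
      Lop (A1op Q) x p t = A1op (fun a b c => Lop Q a b c) x p t := by
  intro x p t ht
  have hF : ContDiffOn ℝ (⊤:ℕ∞) (fun v : V3 => Q v.1 v.2.1 v.2.2) US := hQ.of_le (by simp)
  set F : V3 → ℝ := fun v : V3 => Q v.1 v.2.1 v.2.2 with hFdef
  have hQF : ∀ a b c : ℝ, 0 < c → Q a b c = F (a,b,c) := fun _ _ _ _ => rfl
  have hAeq : ∀ a b c, 0 < c → A1op Q a b c = AK F (a,b,c) := trans_A1 hF hQF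
  have hLeq : ∀ a b c, 0 < c → Lop Q a b c = LK F (a,b,c) := trans_L hF hQF
  have hL : Lop (A1op Q) x p t = LK (AK F) (x,p,t) := trans_L (hAK hF) hAeq x p t ht
  have hR : A1op (fun a b c => Lop Q a b c) x p t = AK (LK F) (x,p,t) :=
    trans_A1 (hLK hF) hLeq x p t ht
  rw [hL, hR, key hF ht]
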